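/- arXiv:2401.10819 — 8 statements merged into one kernel-verified Lean document; each statement's English description precedes it below -/
import Mathlib

section
/- For $n$ i.i.d. uniform $[0,1]$ random variables, the probability that the sum of the two smallest order statistics exceeds $1$ equals $\frac{1}{2^{n-1}}$. -/
open MeasureTheory Set

/-! Up to the null set where two coordinates coincide, the set splits according to which
coordinate `i` is the smallest. Given `x i = t ∈ [0, 1]`, the condition is that every other
coordinate lies in `(max t (1 - t), 1]`, a cube of side `min t (1 - t)`; hence each of the `n`
pieces has volume `∫₀¹ min t (1 - t) ^ (n - 1) dt = 1 / (n 2 ^ (n - 1))`. -/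

theorem volume_setOf_apply_eq_apply {ι : Type*} [Fintype ι] {i j : ι} (hij : i ≠ j) :
    volume {x : ι → ℝ | x i = x j} = 0 := by
  classical
  have hker : {x : ι → ℝ | x i = x j} =
      LinearMap.ker ((LinearMap.proj i : (ι → ℝ) →ₗ[ℝ] ℝ) - LinearMap.proj j) := by
    ext x
    simp [sub_eq_zero]
  rw [hker]
  refine Measure.addHaar_submodule _ _ fun htop => ?_
  have := (Submodule.eq_top_iff'.mp htop) (Pi.single i 1)
  simp [Pi.single_eq_of_ne hij.symm] at this

theorem integral_min_one_sub_pow (m : ℕ) :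
    ∫ t in (0 : ℝ)..1, min t (1 - t) ^ m = 1 / ((m + 1) * 2 ^ m) := by
  have hcont : Continuous fun t : ℝ => min t (1 - t) ^ m := by fun_prop
  have hleft :
      ∫ t in (0 : ℝ)..(1 / 2), min t (1 - t) ^ m = ∫ t in (0 : ℝ)..(1 / 2), t ^ m := by
    refine intervalIntegral.integral_congr fun t ht => ?_
    rw [uIcc_of_le (by norm_num)] at ht
    simp only [min_eq_left (show t ≤ 1 - t by linarith [ht.2])]
  have hright :
      ∫ t in (1 / 2 : ℝ)..1, min t (1 - t) ^ m = ∫ t in (1 / 2 : ℝ)..1, (1 - t) ^ m := by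
    refine intervalIntegral.integral_congr fun t ht => ?_
    rw [uIcc_of_le (by norm_num)] at ht
    simp only [min_eq_right (show 1 - t ≤ t by linarith [ht.1])]
  rw [← intervalIntegral.integral_add_adjacent_intervals (b := 1 / 2)
    (hcont.intervalIntegrable _ _) (hcont.intervalIntegrable _ _), hleft, hright,
    intervalIntegral.integral_comp_sub_left (fun t : ℝ => t ^ m), integral_pow]
  norm_num
  rw [div_pow, one_pow, pow_succ]
  field_simp
  ring

def pairwiseSumGtOne (n : ℕ) : Set (Fin n → ℝ) :=
  {x | (∀ i, x i ∈ Icc (0 : ℝ) 1) ∧ ∀ i j, i ≠ j → (1 : ℝ) < x i + x j}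

def minCellProd (m : ℕ) : Set (ℝ × (Fin m → ℝ)) :=
  {p | p.1 ∈ Icc (0 : ℝ) 1 ∧ p.2 ∈ univ.pi fun _ => Ioc (max p.1 (1 - p.1)) 1}

theorem measurableSet_minCellProd (m : ℕ) : MeasurableSet (minCellProd m) := by
  unfold minCellProd
  measurability

theorem volume_prodMk_preimage_minCellProd (m : ℕ) (t : ℝ) :
    volume (Prod.mk t ⁻¹' minCellProd m) =
      (Icc 0 1).indicator (fun t => ENNReal.ofReal (min t (1 - t) ^ m)) t := by
  by_cases ht : t ∈ Icc (0 : ℝ) 1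
  · have hside : 1 - max t (1 - t) = min t (1 - t) := by
      rw [← min_sub_sub_left, sub_sub_cancel, min_comm]
    rw [show Prod.mk t ⁻¹' minCellProd m = univ.pi fun _ => Ioc (max t (1 - t)) 1 from
      ext fun y => and_iff_right ht, Real.volume_pi_Ioc, indicator_of_mem ht, hside,
      Finset.prod_const, Finset.card_univ, Fintype.card_fin,
      ENNReal.ofReal_pow (le_min ht.1 (sub_nonneg.2 ht.2))]
  · rw [show Prod.mk t ⁻¹' minCellProd m = ∅ from
      eq_empty_of_forall_notMem fun y hy => ht hy.1, measure_empty, indicator_of_notMem ht]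

theorem volume_minCellProd (m : ℕ) :
    (volume : Measure ℝ).prod volume (minCellProd m) = ((m + 1) * 2 ^ m : ENNReal)⁻¹ := by
  have hnonneg : 0 ≤ᵐ[volume.restrict (Icc 0 1)] fun t : ℝ => min t (1 - t) ^ m := by
    filter_upwards [ae_restrict_mem measurableSet_Icc] with t ht
    exact pow_nonneg (le_min ht.1 (sub_nonneg.2 ht.2)) m
  rw [Measure.prod_apply (measurableSet_minCellProd m),
    lintegral_congr (volume_prodMk_preimage_minCellProd m), lintegral_indicator measurableSet_Icc,
    ← ofReal_integral_eq_lintegral_ofReal (by fun_prop : Continuous _).integrableOn_Icc hnonneg,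
    integral_Icc_eq_integral_Ioc, ← intervalIntegral.integral_of_le zero_le_one,
    integral_min_one_sub_pow, one_div, ENNReal.ofReal_inv_of_pos (by positivity)]
  exact_mod_cast congrArg Inv.inv (ENNReal.ofReal_natCast ((m + 1) * 2 ^ m))

section MinCell

variable {m : ℕ}

def minCell (i : Fin (m + 1)) : Set (Fin (m + 1) → ℝ) :=
  {x | x i ∈ Icc (0 : ℝ) 1 ∧ ∀ j, j ≠ i → x j ∈ Ioc (max (x i) (1 - x i)) 1}

theorem minCell_eq_preimage (i : Fin (m + 1)) :
    minCell i = MeasurableEquiv.piFinSuccAbove (fun _ => ℝ) i ⁻¹' minCellProd m := by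
  ext x
  simp only [minCell, minCellProd, mem_preimage, MeasurableEquiv.piFinSuccAbove,
    Fin.insertNthEquiv]
  simp [Fin.forall_iff_succAbove i, Fin.removeNth]

theorem measurableSet_minCell (i : Fin (m + 1)) : MeasurableSet (minCell i) := by
  rw [minCell_eq_preimage]
  exact (measurableSet_minCellProd m).preimage (MeasurableEquiv.measurable _)

theorem volume_minCell (i : Fin (m + 1)) :
    volume (minCell i) = ((m + 1) * 2 ^ m : ENNReal)⁻¹ := by
  rw [minCell_eq_preimage, volume_pi, (measurePreserving_piFinSuccAbove (fun _ => volume) i)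
    |>.measure_preimage (measurableSet_minCellProd m).nullMeasurableSet, ← volume_pi,
    volume_minCellProd]

theorem minCell_subset_pairwiseSumGtOne (i : Fin (m + 1)) :
    minCell i ⊆ pairwiseSumGtOne (m + 1) := by
  rintro x ⟨hxi, hx⟩
  have hhalf : 1 / 2 ≤ max (x i) (1 - x i) := by
    rcases le_total (x i) (1 / 2) with h | h
    · exact le_max_of_le_right (by linarith)
    · exact le_max_of_le_left h
  have hcompl : ∀ j, j ≠ i → 1 - x i < x j := fun j hj =>
    (le_max_right _ _).trans_lt (hx j hj).1
  refine ⟨fun j => ?_, fun j k hjk => ?_⟩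
  · by_cases hj : j = i
    · exact hj ▸ hxi
    · exact ⟨by linarith [(hx j hj).1], (hx j hj).2⟩
  · by_cases hj : j = i
    · subst hj; linarith [hcompl k hjk.symm]
    by_cases hk : k = i
    · subst hk; linarith [hcompl j hjk]
    linarith [(hx j hj).1, (hx k hk).1]

theorem mem_minCell_of_forall_lt {x : Fin (m + 1) → ℝ} (hx : x ∈ pairwiseSumGtOne (m + 1))
    {i : Fin (m + 1)} (hmin : ∀ j, j ≠ i → x i < x j) : x ∈ minCell i :=
  ⟨hx.1 i, fun j hj =>
    ⟨max_lt (hmin j hj) (by linarith [hx.2 i j (Ne.symm hj)]), (hx.1 j).2⟩⟩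

theorem pairwise_disjoint_minCell : Pairwise (Function.onFun Disjoint (minCell (m := m))) := by
  refine fun i j hij => disjoint_left.mpr fun x hxi hxj => ?_
  have := (le_max_left _ _).trans_lt (hxi.2 j hij.symm).1
  have := (le_max_left _ _).trans_lt (hxj.2 i hij).1
  linarith

theorem pairwiseSumGtOne_ae_eq_iUnion_minCell :
    pairwiseSumGtOne (m + 1) =ᵐ[volume] ⋃ i, minCell i := by
  have hties :
      volume (⋃ i, ⋃ j, ⋃ (_ : i ≠ j), {x : Fin (m + 1) → ℝ | x i = x j}) = 0 :=
    measure_iUnion_null fun i => measure_iUnion_null fun j => measure_iUnion_null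
      volume_setOf_apply_eq_apply
  refine ae_eq_set.mpr ⟨measure_mono_null ?_ hties, ?_⟩
  · rintro x ⟨hx, hxU⟩
    obtain ⟨i, hi⟩ := Finite.exists_min x
    by_contra hne
    simp only [mem_iUnion, mem_ofPred_eq, not_exists] at hne
    exact hxU (mem_iUnion.mpr ⟨i, mem_minCell_of_forall_lt hx fun j hj =>
      (hi j).lt_of_ne (hne i j hj.symm)⟩)
  · rw [sdiff_eq_empty.mpr (iUnion_subset minCell_subset_pairwiseSumGtOne), measure_empty]

end MinCell

theorem two_smallest_order_statistics_sum_gt_one_general (n : ℕ) :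
    volume {x : Fin n → ℝ | (∀ i, x i ∈ Set.Icc (0 : ℝ) 1) ∧
        ∀ i j, i ≠ j → (1 : ℝ) < x i + x j}
      = ((2 : ENNReal) ^ (n - 1))⁻¹ := by
  cases n with
  | zero => simp [volume_pi]
  | succ m =>
    change volume (pairwiseSumGtOne (m + 1)) = _
    rw [measure_congr pairwiseSumGtOne_ae_eq_iUnion_minCell,
      measure_iUnion pairwise_disjoint_minCell measurableSet_minCell, tsum_fintype]
    simp only [volume_minCell, Finset.sum_const, Finset.card_univ, Fintype.card_fin, nsmul_eq_mul]
    rw [Nat.add_sub_cancel, Nat.cast_succ, ENNReal.mul_inv (by simp) (by simp), ← mul_assoc,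
      ENNReal.mul_inv_cancel (by simp) (by simp), one_mul]

/-- For `n` i.i.d. uniform `[0,1]` random variables, the probability that the sum of the
two smallest order statistics exceeds 1 equals `1 / 2^(n-1)`.  Equivalently, the Lebesgue
measure of the set of `x ∈ [0,1]ⁿ` whose two smallest coordinates sum to more than 1
(i.e. every pair of distinct coordinates sums to more than 1) is `2^{-(n-1)}`. -/
theorem two_smallest_order_statistics_sum_gt_one (n : ℕ) (hn : 2 ≤ n) :
    volume {x : Fin n → ℝ | (∀ i, x i ∈ Set.Icc (0 : ℝ) 1) ∧
        ∀ i j, i ≠ j → (1 : ℝ) < x i + x j}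
      = ((2 : ENNReal) ^ (n - 1))⁻¹ :=
  two_smallest_order_statistics_sum_gt_one_general n
end

section
/- Any composition of single-passing functions is single-passing. That is, if $g: \mathbb{R}^n \to \mathbb{R}$ is single-passing and $y: \mathbb{R}^m \to \mathbb{R}$ is single-passing, then the function obtained by substituting $y$ for the $i$-th argument of $g$ is single-passing. -/
/-- A differentiable function `f : ℝⁿ → ℝ` is *single-passing* if at every input at most
one of its partial derivatives is nonzero. -/
def SinglePassing {n : ℕ} (f : (Fin n → ℝ) → ℝ) : Prop :=
  ∀ x : Fin n → ℝ, Set.Subsingleton {i : Fin n | fderiv ℝ f x (Pi.single i 1) ≠ 0}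

/-- Any composition of single-passing functions is single-passing: if
`g : ℝⁿ → ℝ` and `y : ℝᵐ → ℝ` are single-passing (differentiable) functions, then the
function obtained by substituting `y` for the `i`-th argument of `g` is single-passing. -/
theorem singlePassing_comp {n m : ℕ} (g : (Fin n → ℝ) → ℝ) (y : (Fin m → ℝ) → ℝ)
    (hgd : Differentiable ℝ g) (hyd : Differentiable ℝ y)
    (hg : SinglePassing g) (hy : SinglePassing y) (i : Fin n) :
    SinglePassing (fun w : Fin (n + m) → ℝ =>
      g (Function.update (fun j : Fin n => w (Fin.castAdd m j)) i
        (y (fun k : Fin m => w (Fin.natAdd n k))))) := by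
  intro x
  set P : (Fin (n + m) → ℝ) →L[ℝ] (Fin n → ℝ) :=
    ContinuousLinearMap.pi fun j => ContinuousLinearMap.proj (Fin.castAdd m j) with hP
  set Q : (Fin (n + m) → ℝ) →L[ℝ] (Fin m → ℝ) :=
    ContinuousLinearMap.pi fun k => ContinuousLinearMap.proj (Fin.natAdd n k) with hQ
  set S : ℝ →L[ℝ] (Fin n → ℝ) :=
    (ContinuousLinearMap.id ℝ ℝ).smulRight (Pi.single i (1 : ℝ)) with hS
  have hSr : ∀ r : ℝ, S r = Pi.single i r := by
    intro r
    funext j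
    simp [hS, Pi.single_apply]
  set F : (Fin (n + m) → ℝ) → (Fin n → ℝ) := fun w =>
    P w + S (y (Q w) - w (Fin.castAdd m i)) with hF
  have hFeq : ∀ w, F w = Function.update (fun j : Fin n => w (Fin.castAdd m j)) i
      (y (fun k : Fin m => w (Fin.natAdd n k))) := by
    intro w
    funext j
    rcases eq_or_ne j i with rfl | hj
    · simp [hF, hSr, hP, hQ]
    · simp [hF, hSr, Pi.single_apply, hj, Function.update_of_ne hj, hP]
  set D : (Fin (n + m) → ℝ) →L[ℝ] (Fin n → ℝ) :=
    P + S.comp ((fderiv ℝ y (Q x)).comp Q - ContinuousLinearMap.proj (Fin.castAdd m i)) with hD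
  have hFd : HasFDerivAt F D x := by
    have h1 : HasFDerivAt (fun w => y (Q w)) ((fderiv ℝ y (Q x)).comp Q) x :=
      (hyd (Q x)).hasFDerivAt.comp x Q.hasFDerivAt
    have h2 := hasFDerivAt_apply (𝕜 := ℝ) (F' := fun _ : Fin (n + m) => ℝ)
      (Fin.castAdd m i) x
    exact P.hasFDerivAt.add ((S.hasFDerivAt.comp x ((h1.sub h2))))
  have hfd : HasFDerivAt (fun w : Fin (n + m) → ℝ =>
      g (Function.update (fun j : Fin n => w (Fin.castAdd m j)) i
        (y (fun k : Fin m => w (Fin.natAdd n k)))))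
      ((fderiv ℝ g (F x)).comp D) x := by
    have := (hgd (F x)).hasFDerivAt.comp x hFd
    apply this.congr_of_eventuallyEq
    filter_upwards with w
    simp [hFeq w]
  have key : ∀ a : Fin (n + m),
      fderiv ℝ (fun w : Fin (n + m) → ℝ =>
      g (Function.update (fun j : Fin n => w (Fin.castAdd m j)) i
        (y (fun k : Fin m => w (Fin.natAdd n k))))) x (Pi.single a 1)
      = fderiv ℝ g (F x) (D (Pi.single a 1)) := by
    intro a; rw [hfd.fderiv]; rfl
  -- computations of D on basis vectors
  have hPc : ∀ j' : Fin n, P (Pi.single (Fin.castAdd m j') (1:ℝ)) = Pi.single j' 1 := by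
    intro j'
    funext j
    simp [hP, Pi.single_apply, Fin.castAdd_inj]
  have hPn : ∀ k : Fin m, P (Pi.single (Fin.natAdd n k) (1:ℝ)) = 0 := by
    intro k
    funext j
    have : ∀ j : Fin n, Fin.castAdd m j ≠ Fin.natAdd n k := by
      intro j h
      have := congrArg Fin.val h
      simp [Fin.castAdd, Fin.natAdd] at this
      omega
    simp [hP, Pi.single_apply, this]
  have hcn : ∀ (j : Fin n) (k : Fin m), Fin.castAdd m j ≠ Fin.natAdd n k := by
    intro j k h
    have := congrArg Fin.val h
    simp [Fin.castAdd, Fin.natAdd] at this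
    omega
  have hQc : ∀ j' : Fin n, Q (Pi.single (Fin.castAdd m j') (1:ℝ)) = 0 := by
    intro j'
    funext k
    simp [hQ, Pi.single_apply, (hcn j' k).symm]
  have hQn : ∀ k : Fin m, Q (Pi.single (Fin.natAdd n k) (1:ℝ)) = Pi.single k 1 := by
    intro k
    have he : ∀ k' : Fin m, (Fin.natAdd n k' = Fin.natAdd n k) = (k' = k) := by
      intro k'; simp [Fin.ext_iff]
    funext k'
    simp [hQ, Pi.single_apply, he]
  have hDc : ∀ j' : Fin n, j' ≠ i →
      D (Pi.single (Fin.castAdd m j') (1:ℝ)) = Pi.single j' 1 := by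
    intro j' hj'
    have h1 : (Pi.single (Fin.castAdd m j') (1:ℝ) : Fin (n+m) → ℝ) (Fin.castAdd m i) = 0 := by
      simp [Pi.single_apply, Fin.castAdd_inj, hj'.symm]
    simp [hD, ContinuousLinearMap.add_apply, ContinuousLinearMap.comp_apply,
      ContinuousLinearMap.sub_apply, ContinuousLinearMap.proj_apply,
      hPc, hQc, h1, hSr]
  have hDci : D (Pi.single (Fin.castAdd m i) (1:ℝ)) = 0 := by
    have h1 : (Pi.single (Fin.castAdd m i) (1:ℝ) : Fin (n+m) → ℝ) (Fin.castAdd m i) = 1 := by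
      simp
    simp only [hD, ContinuousLinearMap.add_apply, ContinuousLinearMap.comp_apply,
      ContinuousLinearMap.sub_apply, ContinuousLinearMap.proj_apply, hPc, hQc, h1,
      map_zero, zero_sub, hSr]
    funext j
    rcases eq_or_ne j i with rfl | hj
    · simp
    · simp [Pi.single_apply, hj]
  have hDn : ∀ k : Fin m, D (Pi.single (Fin.natAdd n k) (1:ℝ)) =
      fderiv ℝ y (Q x) (Pi.single k 1) • (Pi.single i 1 : Fin n → ℝ) := by
    intro k
    have h1 : (Pi.single (Fin.natAdd n k) (1:ℝ) : Fin (n+m) → ℝ) (Fin.castAdd m i) = 0 := by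
      simp [Pi.single_apply, (hcn i k).symm]
    simp only [hD, ContinuousLinearMap.add_apply, ContinuousLinearMap.comp_apply,
      ContinuousLinearMap.sub_apply, ContinuousLinearMap.proj_apply, hPn, hQn, h1,
      sub_zero, hSr, zero_add]
    funext j
    simp [Pi.single_apply, mul_comm]
  set T := fderiv ℝ g (F x) with hT
  have hA : ∀ j' : Fin n,
      (Fin.castAdd m j' ∈ {a : Fin (n + m) | fderiv ℝ (fun w : Fin (n + m) → ℝ =>
        g (Function.update (fun j : Fin n => w (Fin.castAdd m j)) i
          (y (fun k : Fin m => w (Fin.natAdd n k))))) x (Pi.single a 1) ≠ 0}) →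
      j' ≠ i ∧ T (Pi.single j' 1) ≠ 0 := by
    intro j' hj'
    simp only [Set.mem_setOf_eq, key] at hj'
    rcases eq_or_ne j' i with rfl | hne
    · rw [hDci] at hj'; simp at hj'
    · rw [hDc j' hne] at hj'; exact ⟨hne, hj'⟩
  have hB : ∀ k : Fin m,
      (Fin.natAdd n k ∈ {a : Fin (n + m) | fderiv ℝ (fun w : Fin (n + m) → ℝ =>
        g (Function.update (fun j : Fin n => w (Fin.castAdd m j)) i
          (y (fun k : Fin m => w (Fin.natAdd n k))))) x (Pi.single a 1) ≠ 0}) →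
      T (Pi.single i 1) ≠ 0 ∧ fderiv ℝ y (Q x) (Pi.single k 1) ≠ 0 := by
    intro k hk
    simp only [Set.mem_setOf_eq, key] at hk
    rw [hDn k, map_smul, smul_eq_mul] at hk
    exact ⟨right_ne_zero_of_mul hk, left_ne_zero_of_mul hk⟩
  intro a ha b hb
  induction a using Fin.addCases with
  | left j1 =>
    induction b using Fin.addCases with
    | left j2 =>
      have h1 := hA j1 ha
      have h2 := hA j2 hb
      exact congrArg (Fin.castAdd m) (hg (F x) h1.2 h2.2)
    | right k2 =>
      have h1 := hA j1 ha
      have h2 := hB k2 hb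
      exact absurd (hg (F x) h1.2 h2.1) h1.1
  | right k1 =>
    induction b using Fin.addCases with
    | left j2 =>
      have h1 := hB k1 ha
      have h2 := hA j2 hb
      exact absurd (hg (F x) h2.2 h1.1) h2.1
    | right k2 =>
      have h1 := hB k1 ha
      have h2 := hB k2 hb
      exact congrArg (Fin.natAdd n) (hy (Q x) h1.2 h2.2)
end

section
/- Let $T$ be a Schur-concave t-norm with additive generator $g$, let $0 < \hat{t} \in [T(t, c), \hat{t}_{max}]$, and let $K \in \{0,\ldots,n-1\}$. Define $\lambda_K = g^{-1}\left(\frac{1}{n-K}\left(g(\hat{t}) - \sum_{i=1}^K g(t^\downarrow_i) - \sum_{i=1}^m g(c_i)\right)\right)$ where $t^\downarrow$ is $t$ sorted descending. If the vector $\hat{w}$ defined by $\hat{w}_i = \lambda_K$ when $t_i < \lambda_K$ and $\hat{w}_i = t_i$ otherwise lies in $[0,1]^n$ with exactly $K$ entries unchanged above $\lambda_K$, then $T(\hat{w}, c) = \hat{t}$. -/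
open Set Finset
open scoped ENNReal

/-- `t` majorizes `t'`. -/
def Majorizes {n : ℕ} (t t' : Fin n → ℝ) : Prop :=
  (∑ i, t i = ∑ i, t' i) ∧
  ∀ s' : Finset (Fin n), ∃ s : Finset (Fin n), s.card = s'.card ∧
    ∑ i ∈ s', t' i ≤ ∑ i ∈ s, t i

/-- The (extended) t-norm generated by the additive generator `g` with pseudo-inverse
`ginv`: `T x = g⁻¹ (min (g 0⁺) (∑ g xᵢ))`. -/
noncomputable def Tgen (g : ℝ → ℝ≥0∞) (ginv : ℝ≥0∞ → ℝ) {k : ℕ} (x : Fin k → ℝ) : ℝ :=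
  ginv (min (g 0) (∑ i, g (x i)))

/-!
On the indices of `s` the refined vector agrees with `t`; on the other `n - K` indices it equals
`λ_K`, and `g λ_K` is exactly the `(n - K)`-th part of `g t̂ - ∑_{i∈s} g tᵢ - ∑ⱼ g cⱼ`. The
generator sum of `(ŵ, c)` is therefore `max (g t̂) (∑_{i∈s} g tᵢ + ∑ⱼ g cⱼ)`, and it equals `g t̂`
after truncation at `g 0`: either the max is `g t̂`, or the subtraction in `[0, ∞]` truncates to
`0`, so `λ_K = g⁻¹ 0 = 1`, every kept `tᵢ` is `1`, and `t̂ ≤ T(c)` gives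
`min (g 0) (∑ⱼ g cⱼ) ≤ g t̂`.
-/

theorem min_max_eq_of_le_of_min_le {α : Type*} [LinearOrder α] {a b c : α} (hba : b ≤ a)
    (hac : min a c ≤ b) : min a (max b c) = b := by
  rw [min_max_distrib_left, min_eq_right hba, max_eq_left hac]

theorem sum_comp_ite_lt {ι α M : Type*} [Fintype ι] [DecidableEq ι] [LinearOrder α]
    [AddCommMonoid M] (f : α → M) (t : ι → α) (l : α) (s : Finset ι)
    (hkeep : ∀ i ∈ s, l ≤ t i) (hdrop : ∀ i ∉ s, t i < l) :
    ∑ i, f (if t i < l then l else t i) = ∑ i ∈ s, f (t i) + sᶜ.card • f l := by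
  rw [← sum_add_sum_compl s, ← sum_const]
  congr 1
  · exact sum_congr rfl fun i hi => by rw [if_neg (not_lt.2 (hkeep i hi))]
  · exact sum_congr rfl fun i hi => by rw [if_pos (hdrop i (mem_compl.1 hi))]

theorem sum_comp_append {α M : Type*} [AddCommMonoid M] {n m : ℕ} (f : α → M) (x : Fin n → α)
    (y : Fin m → α) : ∑ i, f (Fin.append x y i) = ∑ i, f (x i) + ∑ j, f (y j) := by
  simp only [Fin.sum_univ_add, Fin.append_left, Fin.append_right]

namespace ENNReal

theorem add_natCast_mul_tsub_div_add {a S C : ℝ≥0∞} {N : ℕ} (hN : N ≠ 0) :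
    S + N * ((a - S - C) / N) + C = max a (S + C) := by
  rw [ENNReal.mul_div_cancel (by exact_mod_cast hN) (natCast_ne_top N), tsub_tsub,
    add_right_comm, add_comm, tsub_add_eq_max]

theorem tsub_div_natCast_le {a S C : ℝ≥0∞} {N : ℕ} (hN : N ≠ 0) : (a - S - C) / N ≤ a :=
  div_le_of_le_mul <| (tsub_le_self.trans tsub_le_self).trans <|
    le_mul_of_one_le_right' (by exact_mod_cast Nat.one_le_iff_ne_zero.2 hN)

end ENNReal

section Generator

variable {g : ℝ → ℝ≥0∞} {ginv : ℝ≥0∞ → ℝ}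

theorem g_Tgen (hg_ginv : ∀ y : ℝ≥0∞, y ≤ g 0 → g (ginv y) = y ∧ ginv y ∈ Icc (0 : ℝ) 1)
    {k : ℕ} (x : Fin k → ℝ) : g (Tgen g ginv x) = min (g 0) (∑ i, g (x i)) :=
  (hg_ginv _ (min_le_left _ _)).1

theorem Tgen_mem_Icc (hg_ginv : ∀ y : ℝ≥0∞, y ≤ g 0 → g (ginv y) = y ∧ ginv y ∈ Icc (0 : ℝ) 1)
    {k : ℕ} (x : Fin k → ℝ) : Tgen g ginv x ∈ Icc (0 : ℝ) 1 :=
  (hg_ginv _ (min_le_left _ _)).2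

theorem Tgen_eq_of_min_eq (hginv_g : ∀ x ∈ Icc (0 : ℝ) 1, ginv (g x) = x) {k : ℕ}
    {x : Fin k → ℝ} {y : ℝ} (hy : y ∈ Icc (0 : ℝ) 1) (h : min (g 0) (∑ i, g (x i)) = g y) :
    Tgen g ginv x = y := by
  rw [Tgen, h, hginv_g y hy]

theorem min_sum_add_le_of_le_ginv_div (hg1 : g 1 = 0)
    (hginv_g : ∀ x ∈ Icc (0 : ℝ) 1, ginv (g x) = x) {ι : Type*} {t : ι → ℝ} {s : Finset ι}
    (ht : ∀ i ∈ s, t i ≤ 1) {a C N : ℝ≥0∞} (hC : min (g 0) C ≤ a)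
    (hkeep : ∀ i ∈ s, ginv ((a - ∑ i ∈ s, g (t i) - C) / N) ≤ t i) :
    min (g 0) (∑ i ∈ s, g (t i) + C) ≤ a := by
  by_cases hle : ∑ i ∈ s, g (t i) + C ≤ a
  · exact min_le_of_right_le hle
  have hlevel : ginv ((a - ∑ i ∈ s, g (t i) - C) / N) = 1 := by
    rw [tsub_tsub, tsub_eq_zero_of_le (not_le.1 hle).le, ENNReal.zero_div, ← hg1,
      hginv_g 1 ⟨zero_le_one, le_rfl⟩]
  have hS : ∑ i ∈ s, g (t i) = 0 := sum_eq_zero fun i hi => by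
    rw [le_antisymm (ht i hi) (hlevel ▸ hkeep i hi), hg1]
  rwa [hS, zero_add]

end Generator

theorem additive_generator_refined_value_general (n m : ℕ)
    (g : ℝ → ℝ≥0∞) (ginv : ℝ≥0∞ → ℝ)
    (hganti : StrictAntiOn g (Icc (0 : ℝ) 1)) (hg1 : g 1 = 0)
    (hginv_g : ∀ x ∈ Icc (0 : ℝ) 1, ginv (g x) = x)
    (hg_ginv : ∀ y : ℝ≥0∞, y ≤ g 0 → g (ginv y) = y ∧ ginv y ∈ Icc (0 : ℝ) 1)
    (t : Fin n → ℝ) (c : Fin m → ℝ)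
    (ht : ∀ i, t i ∈ Icc (0 : ℝ) 1)
    (that : ℝ) (hpos : 0 < that)
    (hhigh : that ≤ Tgen g ginv c)
    (K : ℕ) (hK : K < n)
    (s : Finset (Fin n)) (hcard : s.card = K)
    (lamK : ℝ)
    (hlam : lamK =
      ginv ((g that - ∑ i ∈ s, g (t i) - ∑ j, g (c j)) / ((n - K : ℕ) : ℝ≥0∞)))
    (hkeep : ∀ i ∈ s, lamK ≤ t i) (hdrop : ∀ i ∉ s, t i < lamK) :
    Tgen g ginv (Fin.append (fun i => if t i < lamK then lamK else t i) c) = that := by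
  have hnK : n - K ≠ 0 := Nat.sub_ne_zero_of_lt hK
  have hTc := Tgen_mem_Icc hg_ginv c
  have hthat : that ∈ Icc (0 : ℝ) 1 := ⟨hpos.le, hhigh.trans hTc.2⟩
  have hgthat : g that ≤ g 0 := hganti.antitoneOn ⟨le_rfl, zero_le_one⟩ hthat hthat.1
  have hglam : g lamK = (g that - ∑ i ∈ s, g (t i) - ∑ j, g (c j)) / ((n - K : ℕ) : ℝ≥0∞) := by
    rw [hlam]
    exact (hg_ginv _ ((ENNReal.tsub_div_natCast_le hnK).trans hgthat)).1
  have hC : min (g 0) (∑ j, g (c j)) ≤ g that :=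
    g_Tgen hg_ginv c ▸ hganti.antitoneOn hthat hTc hhigh
  refine Tgen_eq_of_min_eq hginv_g hthat ?_
  rw [sum_comp_append, sum_comp_ite_lt g t lamK s hkeep hdrop, card_compl, Fintype.card_fin,
    hcard, nsmul_eq_mul, hglam, ENNReal.add_natCast_mul_tsub_div_add hnK]
  exact min_max_eq_of_le_of_min_le hgthat <|
    min_sum_add_le_of_le_ginv_div hg1 hginv_g (fun i _ => (ht i).2) hC (hlam ▸ hkeep)

/-- Closed form for the minimal refined vector of a Schur-concave t-norm with additive
generator `g`:  with `λ_K = g⁻¹((g t̂ - ∑_{i∈s} g tᵢ - ∑ⱼ g cⱼ)/(n-K))`, where `s` is a set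
of the `K` largest entries of `t` (exactly the entries with `t i ≥ λ_K`), the vector `ŵ`
with `ŵᵢ = λ_K` when `tᵢ < λ_K` and `ŵᵢ = tᵢ` otherwise satisfies `T(ŵ, c) = t̂`,
provided `ŵ ∈ [0,1]ⁿ`. -/
theorem additive_generator_refined_value (n m : ℕ)
    (g : ℝ → ℝ≥0∞) (ginv : ℝ≥0∞ → ℝ)
    (hganti : StrictAntiOn g (Icc (0 : ℝ) 1)) (hg1 : g 1 = 0)
    (hginv_g : ∀ x ∈ Icc (0 : ℝ) 1, ginv (g x) = x)
    (hg_ginv : ∀ y : ℝ≥0∞, y ≤ g 0 → g (ginv y) = y ∧ ginv y ∈ Icc (0 : ℝ) 1)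
    (hschur : ∀ (k : ℕ) (x y : Fin k → ℝ), x ∈ Icc (0 : Fin k → ℝ) 1 →
      y ∈ Icc (0 : Fin k → ℝ) 1 → Majorizes x y → Tgen g ginv x ≤ Tgen g ginv y)
    (t : Fin n → ℝ) (c : Fin m → ℝ)
    (ht : ∀ i, t i ∈ Icc (0 : ℝ) 1) (hc : ∀ j, c j ∈ Icc (0 : ℝ) 1)
    (that : ℝ) (hpos : 0 < that)
    (hlow : Tgen g ginv (Fin.append t c) ≤ that)
    (hhigh : that ≤ Tgen g ginv c)
    (K : ℕ) (hK : K < n)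
    (s : Finset (Fin n)) (hcard : s.card = K)
    (lamK : ℝ)
    (hlam : lamK =
      ginv ((g that - ∑ i ∈ s, g (t i) - ∑ j, g (c j)) / ((n - K : ℕ) : ℝ≥0∞)))
    (hkeep : ∀ i ∈ s, lamK ≤ t i) (hdrop : ∀ i ∉ s, t i < lamK)
    (hlam01 : lamK ∈ Icc (0 : ℝ) 1) :
    Tgen g ginv (Fin.append (fun i => if t i < lamK then lamK else t i) c) = that :=
  additive_generator_refined_value_general n m g ginv hganti hg1 hginv_g hg_ginv t c ht that hpos
    hhigh K hK s hcard lamK hlam hkeep hdrop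
end

section
/- Let $t_1, t_2 \in [0,1]$ and let $T$ be a strict Schur-concave t-norm with additive generator $g$, with residuum $R(t_1, t_2) = \sup\{z : T(t_1, z) \le t_2\} = g^{-1}(\max(g(t_2) - g(t_1), 0))$. For a target $0 < \hat{t} \in [R(t_1, t_2), 1]$ at which $R$ is strictly cone-increasing, the vector $[t_1, g^{-1}(g(\hat{t}) + g(t_1))]$ is a minimal refined vector for $R$ under the $L_1$ norm. -/
open Set
open scoped ENNReal

/-- `F` is strictly cone-increasing at `x`. -/
def StrictlyConeIncreasingAt {n : ℕ} (F : (Fin n → ℝ) → ℝ) (x : Fin n → ℝ) : Prop :=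
  ∃ K : Set (Fin n → ℝ), K.Nonempty ∧
    (∀ s : ℝ, 0 < s → ∀ v ∈ K, s • v ∈ Icc (0 : Fin n → ℝ) 1 → s • v ∈ K) ∧
    ∀ x' : Fin n → ℝ, x' - x ∈ K → F x < F x'

/-!
Writing `T a b = g⁻¹ (g a + g b)`, the vector `(t₁, w)` with `w = g⁻¹ (g t̂ + g t₁)` solves
`R(t₁, w) = t̂` by cancelling `g t₁`, and `t₂ ≤ w` because `R(t₁, t₂) ≤ t̂`. Strict cone-increase
at the target forces `t̂ < 1` (as `R ≤ 1`), so every solution `(w₁, w₂)` satisfies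
`g w₂ = g t̂ + g w₁` with `g w₁` finite. If `w₁ ≥ t₁` then already `w ≤ w₂`. If `w₁ < t₁`, then `T(t₁, w₂) = T(w₁, w)`, and
Schur-concavity compares this with `T(w₁, w₂ + (t₁ - w₁))`, which gives `w ≤ w₂ + (t₁ - w₁)`.
Either way the `L₁` cost `w - t₂` of `(t₁, w)` is at most `|w₁ - t₁| + |w₂ - t₂|`.
-/

theorem StrictlyConeIncreasingAt.lt_of_forall_le {n : ℕ} {F : (Fin n → ℝ) → ℝ}
    {x : Fin n → ℝ} {M : ℝ} (hF : StrictlyConeIncreasingAt F x) (hM : ∀ y, F y ≤ M) :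
    F x < M := by
  obtain ⟨K, ⟨v, hv⟩, -, hK⟩ := hF
  exact (hK (x + v) (by rwa [add_sub_cancel_left])).trans_le (hM _)

section AdditiveGenerator

variable {g : ℝ → ℝ≥0∞} {ginv : ℝ≥0∞ → ℝ}

theorem generator_ne_top (hganti : StrictAntiOn g (Icc 0 1)) (hg0 : g 0 = ⊤) {x : ℝ}
    (hx : x ∈ Icc 0 1) (hx0 : 0 < x) : g x ≠ ⊤ :=
  (hg0 ▸ hganti (left_mem_Icc.2 zero_le_one) hx hx0).ne

theorem generator_pos (hganti : StrictAntiOn g (Icc 0 1)) (hg1 : g 1 = 0) {x : ℝ}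
    (hx : x ∈ Icc 0 1) (hx1 : x < 1) : 0 < g x :=
  hg1 ▸ hganti hx (right_mem_Icc.2 zero_le_one) hx1

theorem le_of_ginv_le (hganti : AntitoneOn g (Icc 0 1))
    (hg_ginv : ∀ y, g (ginv y) = y ∧ ginv y ∈ Icc 0 1) {y z : ℝ≥0∞} (h : ginv y ≤ ginv z) :
    z ≤ y := by
  simpa only [(hg_ginv _).1] using hganti (hg_ginv y).2 (hg_ginv z).2 h

theorem residuum_zero_left (hg1 : g 1 = 0) (hg0 : g 0 = ⊤)
    (hginv_g : ∀ x ∈ Icc (0 : ℝ) 1, ginv (g x) = x) (b : ℝ) : ginv (g b - g 0) = 1 := by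
  rw [hg0, ENNReal.sub_top, ← hg1, hginv_g 1 (right_mem_Icc.2 zero_le_one)]

theorem residuum_tnorm_eq (hganti : StrictAntiOn g (Icc 0 1)) (hg1 : g 1 = 0) (hg0 : g 0 = ⊤)
    (hginv_g : ∀ x ∈ Icc (0 : ℝ) 1, ginv (g x) = x) (hgg : ∀ y, g (ginv y) = y) {a c : ℝ}
    (ha : a ∈ Icc 0 1) (hc : c ∈ Icc 0 1) (hac : a = 0 → c = 1) :
    ginv (g (ginv (g c + g a)) - g a) = c := by
  rcases ha.1.eq_or_lt with rfl | ha0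
  · rw [residuum_zero_left hg1 hg0 hginv_g, hac rfl]
  · rw [hgg, ENNReal.add_sub_cancel_right (generator_ne_top hganti hg0 ha ha0), hginv_g c hc]

theorem generator_eq_add_of_residuum_eq (hgg : ∀ y, g (ginv y) = y) {a b c : ℝ}
    (h : ginv (g b - g a) = c) (hc : 0 < g c) : g b = g c + g a ∧ g a ≠ ⊤ := by
  have hsub : g b - g a = g c := by rw [← h, hgg]
  have hlt : g a < g b := tsub_pos_iff_lt.1 (hsub ▸ hc)
  exact ⟨by rw [← hsub, tsub_add_cancel_of_le hlt.le], hlt.ne_top⟩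

theorem le_tnorm_of_residuum_le (hganti : StrictAntiOn g (Icc 0 1))
    (hginv_g : ∀ x ∈ Icc (0 : ℝ) 1, ginv (g x) = x)
    (hg_ginv : ∀ y, g (ginv y) = y ∧ ginv y ∈ Icc 0 1) {a b c : ℝ} (hb : b ∈ Icc 0 1)
    (hc : c ∈ Icc 0 1) (hgc : 0 < g c) (h : ginv (g b - g a) ≤ c) :
    b ≤ ginv (g c + g a) := by
  have hsub : g c ≤ g b - g a :=
    le_of_ginv_le hganti.antitoneOn hg_ginv (by rwa [hginv_g c hc])
  have hab : g a ≤ g b := (tsub_pos_iff_lt.1 (hgc.trans_le hsub)).le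
  rw [← hganti.le_iff_ge (hg_ginv _).2 hb, (hg_ginv _).1]
  exact add_le_of_le_tsub_right_of_le hab hsub

theorem tnorm_le_add_sub_of_lt (hganti : StrictAntiOn g (Icc 0 1))
    (hg_ginv : ∀ y, g (ginv y) = y ∧ ginv y ∈ Icc 0 1)
    (hschur : ∀ a ∈ Icc (0 : ℝ) 1, ∀ b ∈ Icc (0 : ℝ) 1, ∀ a' ∈ Icc (0 : ℝ) 1,
      ∀ b' ∈ Icc (0 : ℝ) 1, a + b = a' + b' → max a' b' ≤ max a b →
        ginv (g a + g b) ≤ ginv (g a' + g b'))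
    {c : ℝ≥0∞} {t w₁ w₂ : ℝ} (ht : t ∈ Icc 0 1) (hw₁ : w₁ ∈ Icc 0 1) (hw₂ : w₂ ∈ Icc 0 1)
    (hlt : w₁ < t) (hgw₂ : g w₂ = c + g w₁) (hfin : g w₁ ≠ ⊤) :
    ginv (c + g t) ≤ w₂ + (t - w₁) := by
  set w := ginv (c + g t)
  have hw₂w₁ : w₂ ≤ w₁ := (hganti.le_iff_ge hw₁ hw₂).1 (hgw₂ ▸ le_add_self)
  have hw' : w₂ + (t - w₁) ∈ Icc (0 : ℝ) 1 := ⟨by linarith [hw₂.1], by linarith [ht.2]⟩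
  have hswap : g t + g w₂ = g w₁ + g w := by rw [hgw₂, (hg_ginv _).1]; ring
  have hT := hschur t ht w₂ hw₂ w₁ hw₁ _ hw' (by ring)
    (max_le (le_max_of_le_left hlt.le) (le_max_of_le_left (by linarith)))
  rw [hswap] at hT
  have hle := (ENNReal.add_le_add_iff_left hfin).1 (le_of_ginv_le hganti.antitoneOn hg_ginv hT)
  exact (hganti.le_iff_ge hw' (hg_ginv _).2).1 hle

theorem tnorm_le_add_abs_sub (hganti : StrictAntiOn g (Icc 0 1))
    (hg_ginv : ∀ y, g (ginv y) = y ∧ ginv y ∈ Icc 0 1)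
    (hschur : ∀ a ∈ Icc (0 : ℝ) 1, ∀ b ∈ Icc (0 : ℝ) 1, ∀ a' ∈ Icc (0 : ℝ) 1,
      ∀ b' ∈ Icc (0 : ℝ) 1, a + b = a' + b' → max a' b' ≤ max a b →
        ginv (g a + g b) ≤ ginv (g a' + g b'))
    {c : ℝ≥0∞} {t w₁ w₂ : ℝ} (ht : t ∈ Icc 0 1) (hw₁ : w₁ ∈ Icc 0 1) (hw₂ : w₂ ∈ Icc 0 1)
    (hgw₂ : g w₂ = c + g w₁) (hfin : g w₁ ≠ ⊤) :
    ginv (c + g t) ≤ w₂ + |w₁ - t| := by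
  rcases le_or_gt t w₁ with htw₁ | hw₁t
  · have hle : ginv (c + g t) ≤ w₂ := by
      rw [← hganti.le_iff_ge hw₂ (hg_ginv _).2, hgw₂, (hg_ginv _).1]
      gcongr
      exact hganti.antitoneOn ht hw₁ htw₁
    linarith [abs_nonneg (w₁ - t)]
  · rw [abs_of_neg (sub_neg.2 hw₁t), neg_sub]
    exact tnorm_le_add_sub_of_lt hganti hg_ginv hschur ht hw₁ hw₂ hw₁t hgw₂ hfin

end AdditiveGenerator

theorem residuum_L1_minimal_refined_vector_general
    (g : ℝ → ℝ≥0∞) (ginv : ℝ≥0∞ → ℝ)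
    (hganti : StrictAntiOn g (Icc (0 : ℝ) 1)) (hg1 : g 1 = 0) (hg0 : g 0 = ⊤)
    (hginv_g : ∀ x ∈ Icc (0 : ℝ) 1, ginv (g x) = x)
    (hg_ginv : ∀ y : ℝ≥0∞, g (ginv y) = y ∧ ginv y ∈ Icc (0 : ℝ) 1)
    (hschur : ∀ a ∈ Icc (0 : ℝ) 1, ∀ b ∈ Icc (0 : ℝ) 1, ∀ a' ∈ Icc (0 : ℝ) 1,
      ∀ b' ∈ Icc (0 : ℝ) 1, a + b = a' + b' → max a' b' ≤ max a b →
        ginv (g a + g b) ≤ ginv (g a' + g b'))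
    (R : ℝ → ℝ → ℝ) (hR : ∀ a b, R a b = ginv (g b - g a))
    (t₁ t₂ : ℝ) (ht₁ : t₁ ∈ Icc (0 : ℝ) 1) (ht₂ : t₂ ∈ Icc (0 : ℝ) 1)
    (that : ℝ) (hlow : R t₁ t₂ ≤ that) (hhigh : that ≤ 1)
    (hcone : ∀ a ∈ Icc (0 : ℝ) 1, ∀ b ∈ Icc (0 : ℝ) 1, R a b = that →
      StrictlyConeIncreasingAt (fun p : Fin 2 → ℝ => R (1 - p 0) (p 1)) ![1 - a, b]) :
    R t₁ (ginv (g that + g t₁)) = that ∧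
    ∀ w₁ ∈ Icc (0 : ℝ) 1, ∀ w₂ ∈ Icc (0 : ℝ) 1, R w₁ w₂ = that →
      |t₁ - t₁| + |ginv (g that + g t₁) - t₂| ≤ |w₁ - t₁| + |w₂ - t₂| := by
  have hgg (y : ℝ≥0∞) : g (ginv y) = y := (hg_ginv y).1
  have hthat : that ∈ Icc 0 1 := ⟨(hR t₁ t₂ ▸ (hg_ginv _).2.1).trans hlow, hhigh⟩
  set w := ginv (g that + g t₁)
  have hw : w ∈ Icc 0 1 := (hg_ginv _).2
  have hsol : R t₁ w = that := (hR _ _).trans <|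
    residuum_tnorm_eq hganti hg1 hg0 hginv_g hgg ht₁ hthat fun h0 => hhigh.antisymm <| by
      rwa [hR, h0, residuum_zero_left hg1 hg0 hginv_g] at hlow
  have hthat1 : that < 1 := by
    simpa [hsol] using (hcone t₁ ht₁ w hw hsol).lt_of_forall_le fun p => hR _ _ ▸ (hg_ginv _).2.2
  have hgthat : 0 < g that := generator_pos hganti hg1 hthat hthat1
  have ht₂w : t₂ ≤ w :=
    le_tnorm_of_residuum_le hganti hginv_g hg_ginv ht₂ hthat hgthat (hR t₁ t₂ ▸ hlow)
  refine ⟨hsol, fun w₁ hw₁ w₂ hw₂ hRw => ?_⟩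
  obtain ⟨hgw₂, hfin⟩ := generator_eq_add_of_residuum_eq hgg ((hR _ _).symm.trans hRw) hgthat
  have hmin := tnorm_le_add_abs_sub hganti hg_ginv hschur ht₁ hw₁ hw₂ hgw₂ hfin
  rw [sub_self, abs_zero, zero_add, abs_of_nonneg (sub_nonneg.2 ht₂w)]
  linarith [le_abs_self (w₂ - t₂)]

/-- Let `T` be a strict Schur-concave t-norm with additive generator `g` (so `g 0⁺ = ∞`
and `T(a,b) = g⁻¹(g a + g b)`), and let `R(a,b) = g⁻¹(max (g b - g a) 0)` be its residuum
(with truncated subtraction in `[0,∞]`).  For a target `0 < t̂ ∈ [R(t₁,t₂), 1]` at which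
`R` is strictly cone-increasing (adjusted for the antitone first argument), the pair
`(t₁, g⁻¹(g t̂ + g t₁))` is a minimal refined vector for `R` under the `L₁` norm. -/
theorem residuum_L1_minimal_refined_vector
    (g : ℝ → ℝ≥0∞) (ginv : ℝ≥0∞ → ℝ)
    (hganti : StrictAntiOn g (Icc (0 : ℝ) 1)) (hg1 : g 1 = 0) (hg0 : g 0 = ⊤)
    (hgcont : ContinuousOn g (Icc (0 : ℝ) 1))
    (hginv_g : ∀ x ∈ Icc (0 : ℝ) 1, ginv (g x) = x)
    (hg_ginv : ∀ y : ℝ≥0∞, g (ginv y) = y ∧ ginv y ∈ Icc (0 : ℝ) 1)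
    (hschur : ∀ a ∈ Icc (0 : ℝ) 1, ∀ b ∈ Icc (0 : ℝ) 1, ∀ a' ∈ Icc (0 : ℝ) 1,
      ∀ b' ∈ Icc (0 : ℝ) 1, a + b = a' + b' → max a' b' ≤ max a b →
        ginv (g a + g b) ≤ ginv (g a' + g b'))
    (R : ℝ → ℝ → ℝ) (hR : ∀ a b, R a b = ginv (g b - g a))
    (t₁ t₂ : ℝ) (ht₁ : t₁ ∈ Icc (0 : ℝ) 1) (ht₂ : t₂ ∈ Icc (0 : ℝ) 1)
    (that : ℝ) (hpos : 0 < that) (hlow : R t₁ t₂ ≤ that) (hhigh : that ≤ 1)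
    (hcone : ∀ a ∈ Icc (0 : ℝ) 1, ∀ b ∈ Icc (0 : ℝ) 1, R a b = that →
      StrictlyConeIncreasingAt (fun p : Fin 2 → ℝ => R (1 - p 0) (p 1)) ![1 - a, b]) :
    R t₁ (ginv (g that + g t₁)) = that ∧
    ∀ w₁ ∈ Icc (0 : ℝ) 1, ∀ w₂ ∈ Icc (0 : ℝ) 1, R w₁ w₂ = that →
      |t₁ - t₁| + |ginv (g that + g t₁) - t₂| ≤ |w₁ - t₁| + |w₂ - t₂| :=
  residuum_L1_minimal_refined_vector_general g ginv hganti hg1 hg0 hginv_g hg_ginv hschur R hR t₁ t₂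
    ht₁ ht₂ that hlow hhigh hcone
end

section
/- Define the MagicBox operator $\boxdot(x) = \exp(x - \bot(x))$ where $\bot$ is the stop-gradient operator satisfying $\nabla_x \bot(f(x)) = 0$ and forward-evaluation $\overrightarrow{\bot(a)} = \overrightarrow{a}$. Then: (1) the forward evaluation $\overrightarrow{\boxdot(f(x))} = 1$, and (2) $\nabla_x \boxdot(f(x)) = \boxdot(f(x)) \cdot \nabla_x f(x)$. -/
/-- Expressions of one real variable, built from constants, the variable, addition,
multiplication, negation, the exponential, and the stop-gradient operator `⊥`. -/
inductive Expr : Type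
  | const : ℝ → Expr
  | var : Expr
  | add : Expr → Expr → Expr
  | mul : Expr → Expr → Expr
  | neg : Expr → Expr
  | exp : Expr → Expr
  | bot : Expr → Expr

/-- Forward-mode evaluation `→a`: the stop-gradient operator acts as the identity. -/
noncomputable def Expr.fwd : Expr → ℝ → ℝ
  | const c, _ => c
  | var, x => x
  | add a b, x => a.fwd x + b.fwd x
  | mul a b, x => a.fwd x * b.fwd x
  | neg a, x => -(a.fwd x)
  | exp a, x => Real.exp (a.fwd x)
  | bot a, x => a.fwd x

/-- Symbolic differentiation: `∇ₓ ⊥(f x) = 0`. -/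
def Expr.D : Expr → Expr
  | const _ => const 0
  | var => const 1
  | add a b => add a.D b.D
  | mul a b => add (mul a.D b) (mul a b.D)
  | neg a => neg a.D
  | exp a => mul (exp a) a.D
  | bot _ => const 0

/-- The MagicBox operator `⊡(e) = exp (e - ⊥(e))`. -/
def magicbox (e : Expr) : Expr := Expr.exp (Expr.add e (Expr.neg (Expr.bot e)))

lemma iterD_add (n : ℕ) (a b : Expr) :
    Expr.D^[n] (a.add b) = (Expr.D^[n] a).add (Expr.D^[n] b) := by
  induction n generalizing a b with
  | zero => rfl
  | succ n ih => rw [Function.iterate_succ_apply, Function.iterate_succ_apply,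
      Function.iterate_succ_apply]; exact ih a.D b.D

lemma iterD_neg (n : ℕ) (a : Expr) :
    Expr.D^[n] a.neg = (Expr.D^[n] a).neg := by
  induction n generalizing a with
  | zero => rfl
  | succ n ih => rw [Function.iterate_succ_apply, Function.iterate_succ_apply]; exact ih a.D

lemma iterD_const_zero (n : ℕ) :
    Expr.D^[n] (Expr.const 0) = Expr.const 0 := by
  induction n with
  | zero => rfl
  | succ n ih => rw [Function.iterate_succ_apply]; exact ih

lemma iterD_mul_congr (n : ℕ) (a b b' : Expr)
    (h : ∀ m x, (Expr.D^[m] b).fwd x = (Expr.D^[m] b').fwd x) (x : ℝ) :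
    (Expr.D^[n] (a.mul b)).fwd x = (Expr.D^[n] (a.mul b')).fwd x := by
  induction n generalizing a b b' with
  | zero =>
    simp only [Function.iterate_zero, id_eq, Expr.fwd]
    rw [show b.fwd x = b'.fwd x from h 0 x]
  | succ n ih =>
    rw [Function.iterate_succ_apply, Function.iterate_succ_apply]
    show (Expr.D^[n] ((a.D.mul b).add (a.mul b.D))).fwd x
        = (Expr.D^[n] ((a.D.mul b').add (a.mul b'.D))).fwd x
    rw [iterD_add, iterD_add]
    simp only [Expr.fwd]
    rw [ih a.D b b' h, ih a b.D b'.D (fun m y => by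
      have := h (m + 1) y
      rwa [Function.iterate_succ_apply, Function.iterate_succ_apply] at this)]

/-- (1) The forward evaluation of `⊡(f(x))` is `1`, and (2) `∇ₓ ⊡(f(x)) = ⊡(f(x))·∇ₓf(x)`,
i.e. both sides agree under forward evaluation of any further order of differentiation. -/
theorem magicbox_properties :
    (∀ (e : Expr) (x : ℝ), (magicbox e).fwd x = 1) ∧
    (∀ (e : Expr) (n : ℕ) (x : ℝ),
      (Expr.D^[n] (magicbox e).D).fwd x
        = (Expr.D^[n] (Expr.mul (magicbox e) e.D)).fwd x) := by
  constructor
  · intro e x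
    simp [magicbox, Expr.fwd]
  · intro e n x
    have hD : (magicbox e).D
        = Expr.mul (magicbox e) (Expr.add e.D (Expr.neg (Expr.const 0))) := rfl
    rw [hD]
    exact iterD_mul_congr n (magicbox e) _ _
      (fun m y => by
        rw [iterD_add, iterD_neg, iterD_const_zero]
        simp [Expr.fwd]) x
end

section
/- For any functions $l_1, l_2, f: \mathbb{R} \to \mathbb{R}$ and all $n \ge 0$: $\overrightarrow{\nabla_x^{(n)} \boxdot(l_1(x) + l_2(x)) f(x)} = \overrightarrow{\nabla_x^{(n)} \boxdot(l_1(x)) \boxdot(l_2(x)) f(x)}$, i.e., summation inside MagicBox is equivalent under forward evaluation to multiplication of separate MagicBoxes. -/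
/-!
Forward evaluation of iterated derivatives is packaged into the formal Taylor series
`Σₙ (∇ⁿ e)(x) Xⁿ / n!`. It turns sums and products of expressions into those of `ℝ⟦X⟧` and
`∇ₓ` into `d/dX`, so the series of `⊡(e)` solves `y' = y · (series of e)'` with `y(0) = 1`
(the stop-gradient only contributes `∇ₓ ⊥(e) = 0` and `⊥(e) = e` at order zero). Such a linear
equation has at most one power-series solution, and the product of the series of `⊡(l₁)` and
`⊡(l₂)` solves the same equation as the series of `⊡(l₁ + l₂)`.
-/

open PowerSeries

theorem PowerSeries.eq_zero_of_derivative_eq_mul {R : Type*} [CommRing R] [IsAddTorsionFree R]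
    {w g : R⟦X⟧} (hw : d⁄dX R w = w * g) (h0 : constantCoeff w = 0) : w = 0 := by
  ext n
  induction n using Nat.strong_induction_on with
  | _ n ih =>
    rcases n with _ | m
    · simpa using h0
    · have hsum : coeff m (w * g) = 0 := by
        rw [coeff_mul]
        refine Finset.sum_eq_zero fun p hp => ?_
        rw [ih p.1 (Finset.Nat.antidiagonal.fst_lt hp), map_zero, zero_mul]
      have h : (m + 1) • coeff (m + 1) w = 0 := by
        rw [nsmul_eq_mul, mul_comm, ← hsum, ← hw, coeff_derivative]; push_cast; rfl
      simpa using (smul_eq_zero.mp h).resolve_left m.succ_ne_zero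

theorem PowerSeries.eq_of_derivative_eq_mul {R : Type*} [CommRing R] [IsAddTorsionFree R]
    {u v g : R⟦X⟧} (hu : d⁄dX R u = u * g) (hv : d⁄dX R v = v * g)
    (h0 : constantCoeff u = constantCoeff v) : u = v :=
  sub_eq_zero.mp <| eq_zero_of_derivative_eq_mul (by rw [map_sub, hu, hv, sub_mul])
    (by rw [map_sub, h0, sub_self])

namespace Expr

open Nat

noncomputable def taylorSeries (e : Expr) (x : ℝ) : ℝ⟦X⟧ :=
  PowerSeries.mk fun n => (D^[n] e).fwd x / n !

variable {x : ℝ}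

theorem fwd_iterate_D (e : Expr) (n : ℕ) :
    (D^[n] e).fwd x = n ! * coeff n (e.taylorSeries x) := by
  rw [taylorSeries, coeff_mk, mul_div_cancel₀ _ (by positivity)]

@[simp]
theorem constantCoeff_taylorSeries (e : Expr) : constantCoeff (e.taylorSeries x) = e.fwd x := by
  simp [taylorSeries, ← coeff_zero_eq_constantCoeff_apply]

theorem coeff_succ_taylorSeries (e : Expr) (n : ℕ) :
    coeff (n + 1) (e.taylorSeries x) = coeff n (e.D.taylorSeries x) / (n + 1) := by
  simp only [taylorSeries, coeff_mk, Function.iterate_succ_apply, factorial_succ]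
  push_cast
  field_simp

theorem taylorSeries_D (e : Expr) : e.D.taylorSeries x = d⁄dX ℝ (e.taylorSeries x) := by
  ext n
  rw [coeff_derivative, coeff_succ_taylorSeries]
  field_simp

theorem coeff_succ_taylorSeries_eq {e : Expr} {F : ℝ⟦X⟧} {n : ℕ}
    (h : coeff n (e.D.taylorSeries x) = coeff n (d⁄dX ℝ F)) :
    coeff (n + 1) (e.taylorSeries x) = coeff (n + 1) F := by
  rw [coeff_succ_taylorSeries, h, coeff_derivative]
  field_simp

theorem taylorSeries_const (c : ℝ) : (const c).taylorSeries x = C c := by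
  ext n
  induction n generalizing c with
  | zero => simp [fwd]
  | succ n ih => exact coeff_succ_taylorSeries_eq (by rw [D, ih]; simp)

theorem taylorSeries_add (a b : Expr) :
    (add a b).taylorSeries x = a.taylorSeries x + b.taylorSeries x := by
  ext n
  induction n generalizing a b with
  | zero => simp [fwd]
  | succ n ih => exact coeff_succ_taylorSeries_eq (by rw [D, ih]; simp [taylorSeries_D])

theorem taylorSeries_neg (a : Expr) : (neg a).taylorSeries x = -a.taylorSeries x := by
  ext n
  induction n generalizing a with
  | zero => simp [fwd]
  | succ n ih => exact coeff_succ_taylorSeries_eq (by rw [D, ih]; simp [taylorSeries_D])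

theorem taylorSeries_mul (a b : Expr) :
    (mul a b).taylorSeries x = a.taylorSeries x * b.taylorSeries x := by
  ext n
  induction n generalizing a b with
  | zero => simp [fwd]
  | succ n ih =>
    refine coeff_succ_taylorSeries_eq ?_
    rw [D, taylorSeries_add, map_add, ih, ih, taylorSeries_D, taylorSeries_D, ← map_add,
      Derivation.leibniz, smul_eq_mul, smul_eq_mul, add_comm, mul_comm (b.taylorSeries x)]

theorem constantCoeff_taylorSeries_magicbox (e : Expr) :
    constantCoeff ((magicbox e).taylorSeries x) = 1 := by
  simp [magicbox, fwd]

theorem derivative_taylorSeries_magicbox (e : Expr) :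
    d⁄dX ℝ ((magicbox e).taylorSeries x) =
      (magicbox e).taylorSeries x * d⁄dX ℝ (e.taylorSeries x) := by
  rw [← taylorSeries_D]
  simp only [magicbox, D, taylorSeries_mul, taylorSeries_add, taylorSeries_neg, taylorSeries_const,
    map_zero, neg_zero, add_zero, taylorSeries_D]

theorem taylorSeries_magicbox_add (a b : Expr) :
    (magicbox (add a b)).taylorSeries x =
      (magicbox a).taylorSeries x * (magicbox b).taylorSeries x := by
  refine eq_of_derivative_eq_mul (derivative_taylorSeries_magicbox _) ?_
    (by simp only [map_mul, constantCoeff_taylorSeries_magicbox, mul_one])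
  rw [Derivation.leibniz, derivative_taylorSeries_magicbox, derivative_taylorSeries_magicbox,
    taylorSeries_add, map_add, smul_eq_mul, smul_eq_mul]
  ring

end Expr

/-- Summation inside a MagicBox is equivalent under forward evaluation, at every order of
differentiation `n`, to multiplication of the separate MagicBoxes:
`∇ₓⁿ ⊡(l₁(x) + l₂(x)) f(x) ≡ ∇ₓⁿ ⊡(l₁(x)) ⊡(l₂(x)) f(x)`. -/
theorem magicbox_sum_eq_prod (l₁ l₂ f : Expr) (n : ℕ) (x : ℝ) :
    (Expr.D^[n] (Expr.mul (magicbox (Expr.add l₁ l₂)) f)).fwd x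
      = (Expr.D^[n] (Expr.mul (Expr.mul (magicbox l₁) (magicbox l₂)) f)).fwd x := by
  rw [Expr.fwd_iterate_D, Expr.fwd_iterate_D, Expr.taylorSeries_mul, Expr.taylorSeries_mul,
    Expr.taylorSeries_mul, Expr.taylorSeries_magicbox_add]
end

section
/- For any sequence of functions $l_1, \ldots, l_k$ and any order of differentiation $n > 0$: $\overrightarrow{\nabla_x^{(n)} \boxdot(\sum_{i=1}^k l_i(x))} = \overrightarrow{\nabla_x^{(n)} \sum_{i=1}^k (\boxdot(l_i(x)) - 1) \boxdot(\sum_{j=1}^{i-1} l_j(x))}$. -/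
/-- Sum of a list of expressions. -/
def sumE : List Expr → Expr
  | [] => Expr.const 0
  | e :: es => Expr.add e (sumE es)

/-!
Freeze the stop-gradients: evaluate `⊥(e)` at a fixed point `y` while the rest of the
expression follows the active variable `x`. Symbolic differentiation then becomes honest
differentiation in `x`, and forward evaluation is the diagonal `x = y`. In this semantics
`⊡(a + b) = ⊡(a) ⊡(b)`, so with `aᵢ = ⊡(lᵢ)` the right-hand side telescopes:
`∑ᵢ (aᵢ - 1) ∏_{j<i} aⱼ = ∏ᵢ aᵢ - 1 = ⊡(∑ᵢ lᵢ) - 1`, and the constant `-1` disappears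
under any derivative of positive order.
-/

theorem List.sum_ofFn_sub_one_mul_prod_take {R : Type*} [CommRing R] {k : ℕ} (a : Fin k → R) :
    ∑ i : Fin k, (a i - 1) * ((List.ofFn a).take i).prod = (List.ofFn a).prod - 1 := by
  induction k with
  | zero => simp
  | succ k ih =>
    have hsucc : ∀ i : Fin k, (a i.succ - 1) * ((List.ofFn a).take i.succ).prod
        = a 0 * (a i.succ - 1) * ((List.ofFn fun j => a j.succ).take i).prod := by
      intro i
      rw [List.ofFn_succ, Fin.val_succ, List.take_succ_cons, List.prod_cons]
      ring
    rw [Fin.sum_univ_succ, Finset.sum_congr rfl fun i _ => hsucc i]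
    simp only [mul_assoc, ← Finset.mul_sum, ih, List.ofFn_succ, List.prod_cons, Fin.val_zero,
      List.take_zero, List.prod_nil]
    ring

noncomputable def Expr.evalFrozen : Expr → ℝ → ℝ → ℝ
  | const c, _, _ => c
  | var, _, x => x
  | add a b, y, x => a.evalFrozen y x + b.evalFrozen y x
  | mul a b, y, x => a.evalFrozen y x * b.evalFrozen y x
  | neg a, y, x => -(a.evalFrozen y x)
  | exp a, y, x => Real.exp (a.evalFrozen y x)
  | bot a, y, _ => a.fwd y

theorem Expr.fwd_eq_evalFrozen (e : Expr) (x : ℝ) : e.fwd x = e.evalFrozen x x := by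
  induction e <;> simp [fwd, evalFrozen, *]

theorem Expr.hasDerivAt_evalFrozen (e : Expr) (y x : ℝ) :
    HasDerivAt (e.evalFrozen y) (e.D.evalFrozen y x) x := by
  induction e with
  | const c => exact hasDerivAt_const x c
  | var => exact hasDerivAt_id x
  | add a b iha ihb => exact iha.add ihb
  | mul a b iha ihb => exact iha.mul ihb
  | neg a iha => exact iha.neg
  | exp a iha => simpa only [D, evalFrozen, mul_comm] using iha.exp
  | bot a => exact hasDerivAt_const x (a.fwd y)

theorem Expr.evalFrozen_iterate_D (e : Expr) (n : ℕ) (y : ℝ) :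
    (D^[n] e).evalFrozen y = iteratedDeriv n (e.evalFrozen y) := by
  induction n with
  | zero => rfl
  | succ n ih =>
    funext x
    rw [Function.iterate_succ_apply', iteratedDeriv_succ, ← ih]
    exact (hasDerivAt_evalFrozen _ y x).deriv.symm

theorem Expr.evalFrozen_sumE (L : List Expr) (y x : ℝ) :
    (sumE L).evalFrozen y x = (L.map fun e => e.evalFrozen y x).sum := by
  induction L with
  | nil => rfl
  | cons e L ih => simp only [sumE, evalFrozen, ih, List.map_cons, List.sum_cons]

theorem Expr.evalFrozen_magicbox (e : Expr) (y x : ℝ) :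
    (magicbox e).evalFrozen y x = Real.exp (e.evalFrozen y x - e.fwd y) := by
  simp only [magicbox, evalFrozen, sub_eq_add_neg]

theorem Expr.evalFrozen_magicbox_sumE (L : List Expr) (y x : ℝ) :
    (magicbox (sumE L)).evalFrozen y x = (L.map fun e => (magicbox e).evalFrozen y x).prod := by
  induction L with
  | nil => simp [magicbox, sumE, evalFrozen, fwd]
  | cons e L ih =>
    rw [List.map_cons, List.prod_cons, ← ih]
    simp only [evalFrozen_magicbox, sumE, evalFrozen, fwd, fwd_eq_evalFrozen, ← Real.exp_add]
    ring_nf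

theorem Expr.evalFrozen_baseline_decomposition {k : ℕ} (l : Fin k → Expr) (y x : ℝ) :
    (sumE (List.ofFn fun i : Fin k =>
        mul (add (magicbox (l i)) (neg (const 1))) (magicbox (sumE ((List.ofFn l).take i))))
      ).evalFrozen y x
      = (magicbox (sumE (List.ofFn l))).evalFrozen y x - 1 := by
  simp only [evalFrozen_sumE, List.map_ofFn, List.sum_ofFn, Function.comp_def, evalFrozen,
    evalFrozen_magicbox_sumE, List.map_take, ← sub_eq_add_neg]
  exact List.sum_ofFn_sub_one_mul_prod_take fun i => (magicbox (l i)).evalFrozen y x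

/-- For any sequence of expressions `l₁, …, l_k` and any order of differentiation `n > 0`,
`∇ₓⁿ ⊡(∑ᵢ lᵢ(x))` equals, under forward evaluation,
`∇ₓⁿ ∑ᵢ (⊡(lᵢ(x)) - 1) ⊡(∑_{j<i} lⱼ(x))`. -/
theorem magicbox_baseline_decomposition (k : ℕ) (l : Fin k → Expr) (n : ℕ) (hn : 0 < n)
    (x : ℝ) :
    (Expr.D^[n] (magicbox (sumE (List.ofFn l)))).fwd x
      = (Expr.D^[n] (sumE (List.ofFn fun i : Fin k =>
          Expr.mul (Expr.add (magicbox (l i)) (Expr.neg (Expr.const 1)))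
            (magicbox (sumE ((List.ofFn l).take i)))))).fwd x := by
  rw [Expr.fwd_eq_evalFrozen, Expr.fwd_eq_evalFrozen, Expr.evalFrozen_iterate_D,
    Expr.evalFrozen_iterate_D, funext (Expr.evalFrozen_baseline_decomposition l x)]
  simp only [sub_eq_neg_add, iteratedDeriv_const_add hn]
end

section
/- For the Multi-digit MNIST addition pruner with $k \le N$: given digit sequences $w_{1:k}$ (first number prefix) and output digits $y$ with $l_k = \sum_{i=1}^{k+1} y_i 10^{k+1-i}$ and $p_k = \sum_{i=1}^{k} w_i 10^{k-i}$, and $S = 1$ if $k = N$ or digits $y_{k+2}, \ldots, y_{N+1}$ are all 9 (else $S = 0$): there exist completions $w_{k+1:2N} \in \{0,\ldots,9\}^{2N-k}$ such that $n_1 + n_2 = y$ if and only if $0 \le l_k - p_k \le 10^k - S$, where $n_1 = \sum_{i=1}^N w_i 10^{N-i}$, $n_2 = \sum_{i=1}^N w_{N+i} 10^{N-i}$, and $y = \sum_{i=1}^{N+1} y_i 10^{N+1-i}$. -/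
open Finset

lemma nine_sum (m : ℕ) : ∑ j ∈ range m, 9 * 10 ^ j = 10 ^ m - 1 := by
  induction m with
  | zero => simp
  | succ n ih =>
    rw [Finset.sum_range_succ, ih, pow_succ]
    have h : 1 ≤ 10 ^ n := Nat.one_le_pow _ _ (by norm_num)
    generalize 10 ^ n = a at *
    omega

lemma digit_sum (M : ℕ) : ∀ m, m < 10 ^ M → ∑ j ∈ range M, m / 10 ^ j % 10 * 10 ^ j = m := by
  induction M with
  | zero =>
    intro m hm
    simp at hm ⊢
    omega
  | succ n ih =>
    intro m hm
    rw [Finset.sum_range_succ']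
    have key : ∀ j ∈ range n, m / 10 ^ (j + 1) % 10 * 10 ^ (j + 1)
        = 10 * (m / 10 / 10 ^ j % 10 * 10 ^ j) := by
      intro j _
      rw [pow_succ', ← Nat.div_div_eq_div_mul]
      ring
    rw [Finset.sum_congr rfl key, ← Finset.mul_sum,
      ih (m / 10) (by rw [pow_succ] at hm; omega)]
    simp
    omega

lemma digit_sum_rev (M m : ℕ) (hm : m < 10 ^ M) :
    ∑ i ∈ range M, m / 10 ^ (M - 1 - i) % 10 * 10 ^ (M - 1 - i) = m := by
  rw [Finset.sum_range_reflect (fun j => m / 10 ^ j % 10 * 10 ^ j) M]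
  exact digit_sum M m hm

lemma digit_lt (m e : ℕ) : m / 10 ^ e % 10 ≤ 9 :=
  Nat.lt_succ_iff.mp (Nat.mod_lt _ (by norm_num))

lemma split_sum (f : ℕ → ℕ) (k N : ℕ) (hkN : k ≤ N) :
    ∑ i ∈ range N, f i * 10 ^ (N - 1 - i)
      = (∑ i ∈ range k, f i * 10 ^ (k - 1 - i)) * 10 ^ (N - k)
        + ∑ i ∈ Ico k N, f i * 10 ^ (N - 1 - i) := by
  rw [range_eq_Ico, ← Finset.sum_Ico_consecutive _ (Nat.zero_le k) hkN, ← range_eq_Ico,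
    Finset.sum_mul]
  congr 1
  refine Finset.sum_congr rfl fun i hi => ?_
  rw [mem_range] at hi
  rw [mul_assoc, ← pow_add]
  congr 2
  omega

lemma tail_le (M : ℕ) (g : ℕ → ℕ) (hg : ∀ j, j < M → g j ≤ 9) :
    ∑ j ∈ range M, g j * 10 ^ (M - 1 - j) ≤ 10 ^ M - 1 := by
  calc ∑ j ∈ range M, g j * 10 ^ (M - 1 - j)
      ≤ ∑ j ∈ range M, 9 * 10 ^ (M - 1 - j) :=
        Finset.sum_le_sum fun j hj => Nat.mul_le_mul_right _ (hg j (mem_range.mp hj))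
    _ = ∑ j ∈ range M, 9 * 10 ^ j := Finset.sum_range_reflect (fun j => 9 * 10 ^ j) M
    _ = 10 ^ M - 1 := nine_sum M

lemma nine_sum_rev (M : ℕ) : ∑ j ∈ range M, 9 * 10 ^ (M - 1 - j) = 10 ^ M - 1 := by
  rw [Finset.sum_range_reflect (fun j => 9 * 10 ^ j) M]
  exact nine_sum M

lemma tail_le_of_lt (M : ℕ) (g : ℕ → ℕ) (hg : ∀ j, j < M → g j ≤ 9)
    (j0 : ℕ) (hj0 : j0 < M) (h9 : g j0 < 9) :
    ∑ j ∈ range M, g j * 10 ^ (M - 1 - j) ≤ 10 ^ M - 2 := by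
  have hmem : j0 ∈ range M := mem_range.mpr hj0
  have e1 := Finset.add_sum_erase (range M) (fun j => g j * 10 ^ (M - 1 - j)) hmem
  have e2 := Finset.add_sum_erase (range M) (fun j => 9 * 10 ^ (M - 1 - j)) hmem
  have hE : (∑ j ∈ (range M).erase j0, g j * 10 ^ (M - 1 - j))
      ≤ ∑ j ∈ (range M).erase j0, 9 * 10 ^ (M - 1 - j) :=
    Finset.sum_le_sum fun j hj =>
      Nat.mul_le_mul_right _ (hg j (mem_range.mp (Finset.mem_of_mem_erase hj)))
  have h9s := nine_sum_rev M
  have hgb : g j0 * 10 ^ (M - 1 - j0) ≤ 8 * 10 ^ (M - 1 - j0) :=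
    Nat.mul_le_mul_right _ (by omega)
  have hpow : 1 ≤ 10 ^ (M - 1 - j0) := Nat.one_le_pow _ _ (by norm_num)
  have hM : 1 ≤ 10 ^ M := Nat.one_le_pow _ _ (by norm_num)
  omega

/-- Correctness of the Multi-digit MNIST addition symbolic pruner for `k ≤ N`.
Digits are `0`-indexed here: `y 0, …, y N` are the `N+1` output digits (with `y 0 ∈ {0,1}`)
of the sum `y = ∑_{i≤N} y_i 10^{N-i}`, and `w 0, …, w (k-1)` is the generated prefix of
the first number.  With `l_k = ∑_{i≤k} y_i 10^{k-i}`, `p_k = ∑_{i<k} w_i 10^{k-1-i}`, and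
`S = 1` iff `k = N` or all digits `y (k+1), …, y N` equal `9` (else `S = 0`):
a completion `w' ∈ {0,…,9}^{2N}` of the prefix with `n₁ + n₂ = y` exists iff
`0 ≤ l_k - p_k ≤ 10^k - S`. -/
theorem mnist_add_pruner_correct (N k : ℕ) (hk1 : 1 ≤ k) (hkN : k ≤ N)
    (y w : ℕ → ℕ)
    (hy0 : y 0 ≤ 1) (hy : ∀ i, i ≤ N → y i ≤ 9) (hw : ∀ i, i < k → w i ≤ 9) :
    (∃ w' : ℕ → ℕ, (∀ i, i < 2 * N → w' i ≤ 9) ∧ (∀ i, i < k → w' i = w i) ∧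
        (∑ i ∈ range N, w' i * 10 ^ (N - 1 - i))
          + (∑ i ∈ range N, w' (N + i) * 10 ^ (N - 1 - i))
        = ∑ i ∈ range (N + 1), y i * 10 ^ (N - i))
    ↔ (0 ≤ ((∑ i ∈ range (k + 1), y i * 10 ^ (k - i) : ℕ) : ℤ)
            - ((∑ i ∈ range k, w i * 10 ^ (k - 1 - i) : ℕ) : ℤ)
        ∧ ((∑ i ∈ range (k + 1), y i * 10 ^ (k - i) : ℕ) : ℤ)
            - ((∑ i ∈ range k, w i * 10 ^ (k - 1 - i) : ℕ) : ℤ)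
          ≤ 10 ^ k - (if ∀ i, k + 1 ≤ i → i ≤ N → y i = 9 then (1 : ℤ) else 0)) := by
  set L : ℕ := ∑ i ∈ range (k + 1), y i * 10 ^ (k - i) with hLdef
  set P : ℕ := ∑ i ∈ range k, w i * 10 ^ (k - 1 - i) with hPdef
  set R : ℕ := ∑ j ∈ range (N - k), y (k + 1 + j) * 10 ^ (N - k - 1 - j) with hRdef
  have hb1 : 1 ≤ 10 ^ (N - k) := Nat.one_le_pow _ _ (by norm_num)
  have ha1 : 1 ≤ 10 ^ k := Nat.one_le_pow _ _ (by norm_num)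
  have hab : 10 ^ k * 10 ^ (N - k) = 10 ^ N := by rw [← pow_add]; congr 1; omega
  -- decomposition of the target number
  have hY : ∑ i ∈ range (N + 1), y i * 10 ^ (N - i) = L * 10 ^ (N - k) + R := by
    have h := split_sum y (k + 1) (N + 1) (by omega)
    simp only [Nat.add_sub_cancel] at h
    rw [show N + 1 - (k + 1) = N - k from by omega] at h
    rw [Finset.sum_Ico_eq_sum_range, show N + 1 - (k + 1) = N - k from by omega] at h
    rw [h, hLdef, hRdef]
    congr 1
    refine Finset.sum_congr rfl fun j hj => ?_
    rw [mem_range] at hj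
    rw [show N - (k + 1 + j) = N - k - 1 - j from by omega]
  have hR1 : R ≤ 10 ^ (N - k) - 1 :=
    tail_le (N - k) _ (fun j hj => hy _ (by omega))
  -- reformulations of R under the S-condition
  have hS9 : (∀ i, k + 1 ≤ i → i ≤ N → y i = 9) → R = 10 ^ (N - k) - 1 := by
    intro hS
    rw [hRdef, ← nine_sum_rev (N - k)]
    refine Finset.sum_congr rfl fun j hj => ?_
    rw [mem_range] at hj
    rw [hS (k + 1 + j) (by omega) (by omega)]
  have hSn : (¬ ∀ i, k + 1 ≤ i → i ≤ N → y i = 9) → R ≤ 10 ^ (N - k) - 2 := by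
    intro hS
    push_neg at hS
    obtain ⟨i, hi1, hi2, hi9⟩ := hS
    refine tail_le_of_lt (N - k) _ (fun j hj => hy _ (by omega)) (i - (k + 1)) (by omega) ?_
    rw [show k + 1 + (i - (k + 1)) = i from by omega]
    have := hy i hi2
    omega
  constructor
  · rintro ⟨w', hd, hpre, hsum⟩
    set r1 : ℕ := ∑ j ∈ range (N - k), w' (k + j) * 10 ^ (N - k - 1 - j) with hr1def
    set n2 : ℕ := ∑ i ∈ range N, w' (N + i) * 10 ^ (N - 1 - i) with hn2def
    have hn1 : ∑ i ∈ range N, w' i * 10 ^ (N - 1 - i) = P * 10 ^ (N - k) + r1 := by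
      rw [split_sum w' k N hkN]
      congr 1
      · congr 1
        exact Finset.sum_congr rfl fun i hi => by rw [hpre i (mem_range.mp hi)]
      · rw [Finset.sum_Ico_eq_sum_range]
        refine Finset.sum_congr rfl fun j hj => ?_
        rw [mem_range] at hj
        rw [show N - 1 - (k + j) = N - k - 1 - j from by omega]
    have hr1le : r1 ≤ 10 ^ (N - k) - 1 :=
      tail_le (N - k) _ (fun j hj => hd _ (by omega))
    have hn2le : n2 ≤ 10 ^ N - 1 :=
      tail_le N _ (fun j hj => hd _ (by omega))
    rw [hn1, hY] at hsum
    have key : ((P : ℤ) * 10 ^ (N - k) + r1) + n2 = (L : ℤ) * 10 ^ (N - k) + R := by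
      exact_mod_cast hsum
    have hmul : ((L : ℤ) - P) * 10 ^ (N - k) = (r1 : ℤ) + n2 - R := by
      linear_combination -key
    have hRle : (R : ℤ) ≤ 10 ^ (N - k) - 1 := by
      have := hR1; zify [hb1] at this; exact this
    have hr1leZ : (r1 : ℤ) ≤ 10 ^ (N - k) - 1 := by
      have := hr1le; zify [hb1] at this; exact this
    have hn2leZ : (n2 : ℤ) ≤ 10 ^ N - 1 := by
      have h1N : 1 ≤ 10 ^ N := Nat.one_le_pow _ _ (by norm_num)
      have := hn2le; zify [h1N] at this; exact this
    have hbZpos : (0 : ℤ) < 10 ^ (N - k) := by positivity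
    have hlow : 0 ≤ (L : ℤ) - P := by
      by_contra h
      push_neg at h
      have h' : (L : ℤ) - P ≤ -1 := by omega
      have : ((L : ℤ) - P) * 10 ^ (N - k) ≤ (-1) * 10 ^ (N - k) :=
        mul_le_mul_of_nonneg_right h' (le_of_lt hbZpos)
      have hr0 : (0 : ℤ) ≤ r1 := by positivity
      have hn0 : (0 : ℤ) ≤ n2 := by positivity
      linarith
    refine ⟨hlow, ?_⟩
    have habZ : (10 : ℤ) ^ k * 10 ^ (N - k) = 10 ^ N := by
      rw [← pow_add]; congr 1; omega
    by_cases hS : ∀ i, k + 1 ≤ i → i ≤ N → y i = 9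
    · rw [if_pos hS]
      have hReq : (R : ℤ) = 10 ^ (N - k) - 1 := by
        have := hS9 hS; zify [hb1] at this; omega
      have hlt : ((L : ℤ) - P) * 10 ^ (N - k) < 10 ^ k * 10 ^ (N - k) := by
        rw [habZ, hmul]; linarith
      have := lt_of_mul_lt_mul_right hlt (le_of_lt hbZpos)
      linarith [Int.add_one_le_iff.mpr this]
    · rw [if_neg hS]
      have hR0 : (0 : ℤ) ≤ R := by positivity
      have hlt : ((L : ℤ) - P) * 10 ^ (N - k) < (10 ^ k + 1) * 10 ^ (N - k) := by
        rw [add_mul, one_mul, habZ, hmul]; linarith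
      have := lt_of_mul_lt_mul_right hlt (le_of_lt hbZpos)
      linarith [Int.add_one_le_iff.mpr this]
  · rintro ⟨h0, h1⟩
    have hPL : P ≤ L := by exact_mod_cast sub_nonneg.mp h0
    set d : ℕ := L - P with hddef
    have hdZ : (d : ℤ) = (L : ℤ) - P := by
      rw [hddef, Nat.cast_sub hPL]
    -- bound on t := d * 10^(N-k) + R
    have ht : d * 10 ^ (N - k) + R ≤ (10 ^ (N - k) - 1) + (10 ^ N - 1) := by
      by_cases hS : ∀ i, k + 1 ≤ i → i ≤ N → y i = 9
      · rw [if_pos hS] at h1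
        have h2 : ((d + 1 : ℕ) : ℤ) ≤ ((10 ^ k : ℕ) : ℤ) := by
          push_cast
          rw [hdZ]
          linarith
        have h2' : d + 1 ≤ 10 ^ k := by exact_mod_cast h2
        have heq : (10 ^ k - 1) * 10 ^ (N - k) = 10 ^ N - 10 ^ (N - k) := by
          rw [Nat.sub_mul, one_mul, hab]
        have hdb : d * 10 ^ (N - k) ≤ 10 ^ N - 10 ^ (N - k) :=
          heq ▸ Nat.mul_le_mul_right _ (by omega : d ≤ 10 ^ k - 1)
        have hble : 10 ^ (N - k) ≤ 10 ^ N := Nat.pow_le_pow_right (by norm_num) (by omega)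
        omega
      · rw [if_neg hS] at h1
        have hR2 := hSn hS
        have hklt : k < N := by
          by_contra hc
          exact hS fun i h1i h2i => absurd h1i (by omega)
        have hphi : 2 ≤ 10 ^ (N - k) := by
          calc 2 ≤ 10 ^ 1 := by norm_num
          _ ≤ 10 ^ (N - k) := Nat.pow_le_pow_right (by norm_num) (by omega)
        have h2 : ((d : ℕ) : ℤ) ≤ ((10 ^ k : ℕ) : ℤ) := by
          push_cast
          rw [hdZ]
          linarith
        have hdle : d ≤ 10 ^ k := by exact_mod_cast h2
        have hdb : d * 10 ^ (N - k) ≤ 10 ^ N := by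
          rw [← hab]; exact Nat.mul_le_mul_right _ hdle
        have h1N : 1 ≤ 10 ^ N := Nat.one_le_pow _ _ (by norm_num)
        omega
    obtain ⟨r1, n2, hr1le, hn2le, hsplit⟩ :
        ∃ r1 n2 : ℕ, r1 ≤ 10 ^ (N - k) - 1 ∧ n2 ≤ 10 ^ N - 1 ∧
          r1 + n2 = d * 10 ^ (N - k) + R := by
      refine ⟨min (d * 10 ^ (N - k) + R) (10 ^ (N - k) - 1),
        (d * 10 ^ (N - k) + R) - min (d * 10 ^ (N - k) + R) (10 ^ (N - k) - 1),
        min_le_right _ _, ?_, ?_⟩ <;> omega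
    refine ⟨fun i => if i < k then w i else if i < N then r1 / 10 ^ (N - 1 - i) % 10
        else n2 / 10 ^ (2 * N - 1 - i) % 10, ?_, ?_, ?_⟩
    · intro i _
      simp only []
      split_ifs with h h2
      · exact hw i h
      · exact digit_lt _ _
      · exact digit_lt _ _
    · intro i hi
      simp only []
      rw [if_pos hi]
    · simp only []
      have hn1 : ∑ i ∈ range N,
          (if i < k then w i else if i < N then r1 / 10 ^ (N - 1 - i) % 10
            else n2 / 10 ^ (2 * N - 1 - i) % 10) * 10 ^ (N - 1 - i)
          = P * 10 ^ (N - k) + r1 := by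
        rw [split_sum _ k N hkN]
        congr 1
        · congr 1
          refine Finset.sum_congr rfl fun i hi => ?_
          rw [mem_range] at hi
          rw [if_pos hi]
        · rw [Finset.sum_Ico_eq_sum_range]
          rw [show (∑ j ∈ range (N - k),
              (if k + j < k then w (k + j) else if k + j < N then r1 / 10 ^ (N - 1 - (k + j)) % 10
                else n2 / 10 ^ (2 * N - 1 - (k + j)) % 10) * 10 ^ (N - 1 - (k + j)))
              = ∑ j ∈ range (N - k), r1 / 10 ^ (N - k - 1 - j) % 10 * 10 ^ (N - k - 1 - j) from ?_]
          · exact digit_sum_rev (N - k) r1 (by omega)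
          · refine Finset.sum_congr rfl fun j hj => ?_
            rw [mem_range] at hj
            rw [if_neg (by omega), if_pos (by omega),
              show N - 1 - (k + j) = N - k - 1 - j from by omega]
      have hn2 : ∑ i ∈ range N,
          (if N + i < k then w (N + i) else if N + i < N then r1 / 10 ^ (N - 1 - (N + i)) % 10
            else n2 / 10 ^ (2 * N - 1 - (N + i)) % 10) * 10 ^ (N - 1 - i)
          = n2 := by
        rw [show (∑ i ∈ range N,
            (if N + i < k then w (N + i) else if N + i < N then r1 / 10 ^ (N - 1 - (N + i)) % 10
              else n2 / 10 ^ (2 * N - 1 - (N + i)) % 10) * 10 ^ (N - 1 - i))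
            = ∑ i ∈ range N, n2 / 10 ^ (N - 1 - i) % 10 * 10 ^ (N - 1 - i) from ?_]
        · refine digit_sum_rev N n2 ?_
          have h1N : 1 ≤ 10 ^ N := Nat.one_le_pow _ _ (by norm_num)
          omega
        · refine Finset.sum_congr rfl fun i hi => ?_
          rw [if_neg (by omega), if_neg (by omega),
            show 2 * N - 1 - (N + i) = N - 1 - i from by omega]
      rw [hn1, hn2, hY, add_assoc, hsplit, ← add_assoc, ← Nat.add_mul,
        show P + d = L from by omega]
end
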